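/- Let μ be a Borel probability measure on ℝ, let α ≥ 1, t₀ > 0 and C_U < ∞ be constants such that μ({u : |u| ≤ t}) ≤ C_U·t^α for all t ∈ (0, t₀]. Then there exist a constant C < ∞ and τ₁ > 0 such that for all τ ∈ (0, τ₁], ∫ Φ(−|u|/τ) dμ(u) ≤ C·τ^α. -/
import Mathlib


open MeasureTheory Real Set Filter
open ENNReal

/-- The standard normal cumulative distribution function
`Φ(t) = ∫_{-∞}^t (2π)^{-1/2} e^{-s²/2} ds`. -/
noncomputable def stdNormalCDF (t : ℝ) : ℝ :=
  ∫ s in Set.Iic t, (Real.sqrt (2 * Real.pi))⁻¹ * Real.exp (-(s ^ 2) / 2)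


lemma gaussDen_integrable :
    Integrable (fun x : ℝ => (Real.sqrt (2 * Real.pi))⁻¹ * Real.exp (-(x ^ 2) / 2)) := by
  have h : Integrable (fun x : ℝ => Real.exp (-(1/2 : ℝ) * x ^ 2)) :=
    integrable_exp_neg_mul_sq (by norm_num)
  have h2 := h.const_mul (Real.sqrt (2 * Real.pi))⁻¹
  refine h2.congr ?_
  refine Eventually.of_forall fun x => ?_
  simp only []
  have : -(1/2 : ℝ) * x ^ 2 = -(x ^ 2) / 2 := by ring
  rw [this]

lemma stdNormalCDF_nonneg (t : ℝ) : 0 ≤ stdNormalCDF t :=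
  setIntegral_nonneg measurableSet_Iic (fun x _ => by positivity)

lemma stdNormalCDF_mono : Monotone stdNormalCDF := by
  intro a b hab
  exact setIntegral_mono_set gaussDen_integrable.integrableOn
    (Eventually.of_forall fun x => by positivity)
    (HasSubset.Subset.eventuallyLE (Iic_subset_Iic.2 hab))

lemma stdNormalCDF_measurable : Measurable stdNormalCDF :=
  stdNormalCDF_mono.measurable

lemma stdNormalCDF_neg_eq (a : ℝ) :
    stdNormalCDF (-a)
      = ∫ x in Ioi a, (Real.sqrt (2 * Real.pi))⁻¹ * Real.exp (-(x ^ 2) / 2) := by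
  have := integral_comp_neg_Iic (-a)
    (fun x : ℝ => (Real.sqrt (2 * Real.pi))⁻¹ * Real.exp (-(x ^ 2) / 2))
  rw [neg_neg] at this
  rw [stdNormalCDF, ← this]
  simp [neg_sq]

lemma lintegral_Ioi_gaussDen (a : ℝ) :
    ∫⁻ x in Ioi a, ENNReal.ofReal ((Real.sqrt (2 * Real.pi))⁻¹ * Real.exp (-(x ^ 2) / 2))
      = ENNReal.ofReal (stdNormalCDF (-a)) := by
  rw [stdNormalCDF_neg_eq,
    ofReal_integral_eq_lintegral_ofReal gaussDen_integrable.integrableOn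
      (Eventually.of_forall fun x => by positivity)]

lemma stdNormalCDF_tail (a : ℝ) (ha : 0 ≤ a) :
    stdNormalCDF (-a) ≤ Real.sqrt (4 * Real.pi) * Real.exp (-(a ^ 2) / 4) := by
  rw [stdNormalCDF_neg_eq]
  have hint : Integrable (fun x : ℝ => Real.exp (-(1/4 : ℝ) * x ^ 2)) :=
    integrable_exp_neg_mul_sq (by norm_num)
  have hint2 : Integrable
      (fun x : ℝ => Real.exp (-(a ^ 2) / 4) * Real.exp (-(1/4 : ℝ) * x ^ 2)) :=
    hint.const_mul _
  have step1 : (∫ x in Ioi a, (Real.sqrt (2 * Real.pi))⁻¹ * Real.exp (-(x ^ 2) / 2))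
      ≤ ∫ x in Ioi a, Real.exp (-(a ^ 2) / 4) * Real.exp (-(1/4 : ℝ) * x ^ 2) := by
    refine setIntegral_mono_on ?_ hint2.integrableOn measurableSet_Ioi ?_
    · have hgi : Integrable
          (fun x : ℝ => (Real.sqrt (2 * Real.pi))⁻¹ * Real.exp (-(x ^ 2) / 2)) := by
        have h : Integrable (fun x : ℝ => Real.exp (-(1/2 : ℝ) * x ^ 2)) :=
          integrable_exp_neg_mul_sq (by norm_num)
        refine (h.const_mul (Real.sqrt (2 * Real.pi))⁻¹).congr ?_
        refine Eventually.of_forall fun x => ?_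
        simp only []
        have : -(1/2 : ℝ) * x ^ 2 = -(x ^ 2) / 2 := by ring
        rw [this]
      exact hgi.integrableOn
    · intro x hx
      have hax : a ≤ x := le_of_lt hx
      have h1 : (Real.sqrt (2 * Real.pi))⁻¹ ≤ 1 := by
        rw [inv_le_one_iff₀]
        right
        rw [show (1:ℝ) = Real.sqrt 1 by simp]
        exact Real.sqrt_le_sqrt (by nlinarith [Real.pi_gt_three])
      have h2 : Real.exp (-(x ^ 2) / 2)
          ≤ Real.exp (-(a ^ 2) / 4) * Real.exp (-(1/4 : ℝ) * x ^ 2) := by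
        rw [← Real.exp_add]
        apply Real.exp_le_exp.2
        nlinarith [sq_nonneg (x - a), sq_nonneg a, sq_nonneg x]
      calc (Real.sqrt (2 * Real.pi))⁻¹ * Real.exp (-(x ^ 2) / 2)
          ≤ 1 * Real.exp (-(x ^ 2) / 2) := by
            apply mul_le_mul_of_nonneg_right h1 (Real.exp_pos _).le
        _ = Real.exp (-(x ^ 2) / 2) := one_mul _
        _ ≤ _ := h2
  have step2 : (∫ x in Ioi a, Real.exp (-(a ^ 2) / 4) * Real.exp (-(1/4 : ℝ) * x ^ 2))
      ≤ ∫ x : ℝ, Real.exp (-(a ^ 2) / 4) * Real.exp (-(1/4 : ℝ) * x ^ 2) :=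
    setIntegral_le_integral hint2 (Eventually.of_forall fun x => by positivity)
  have step3 : (∫ x : ℝ, Real.exp (-(a ^ 2) / 4) * Real.exp (-(1/4 : ℝ) * x ^ 2))
      = Real.sqrt (4 * Real.pi) * Real.exp (-(a ^ 2) / 4) := by
    rw [MeasureTheory.integral_const_mul, integral_gaussian]
    rw [show Real.pi / (1/4 : ℝ) = 4 * Real.pi by ring]
    ring
  linarith

lemma exp_small (α t₀ τ : ℝ) (hα : 0 < α) (ht₀ : 0 < t₀) (hτ : 0 < τ) (hτ1 : τ ≤ 1) :
    Real.exp (-((t₀ / τ) ^ 2) / 4)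
      ≤ (Nat.factorial (Nat.ceil α) : ℝ) * (4 / t₀ ^ 2) ^ (Nat.ceil α) * τ ^ α := by
  set n := Nat.ceil α with hn
  set y : ℝ := (t₀ / τ) ^ 2 / 4 with hy_def
  have hy : (0:ℝ) < y := by positivity
  have hypos : (0:ℝ) < y ^ n := by positivity
  have hfac : (0:ℝ) < (Nat.factorial n : ℝ) := by positivity
  have hpow : y ^ n / (Nat.factorial n : ℝ) ≤ Real.exp y :=
    Real.pow_div_factorial_le_exp y hy.le n
  rw [div_le_iff₀ hfac] at hpow
  have hexp : Real.exp (-y) ≤ (Nat.factorial n : ℝ) / y ^ n := by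
    rw [le_div_iff₀ hypos, Real.exp_neg, inv_mul_le_iff₀ (Real.exp_pos _)]
    linarith
  have key : (Nat.factorial n : ℝ) / y ^ n
      = (Nat.factorial n : ℝ) * (4 / t₀ ^ 2) ^ n * (τ ^ 2) ^ n := by
    have hτ' : τ ≠ 0 := ne_of_gt hτ
    have ht₀' : t₀ ≠ 0 := ne_of_gt ht₀
    rw [hy_def]
    rw [mul_assoc, ← mul_pow, div_pow, div_div_eq_mul_div, div_pow]
    rw [div_eq_iff (by positivity), mul_assoc, ← mul_pow]
    congr 2
    field_simp
  have hτpow : (τ ^ 2 : ℝ) ^ n ≤ τ ^ α := by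
    have h1 : (τ ^ 2 : ℝ) ^ n = τ ^ ((2 * n : ℕ) : ℝ) := by
      rw [Real.rpow_natCast, ← pow_mul]
    rw [h1]
    apply Real.rpow_le_rpow_of_exponent_ge hτ hτ1
    calc α ≤ (n : ℝ) := Nat.le_ceil α
      _ ≤ ((2 * n : ℕ) : ℝ) := by push_cast; nlinarith [Nat.cast_nonneg (α := ℝ) n]
  have h0 : Real.exp (-((t₀ / τ) ^ 2) / 4) = Real.exp (-y) := by
    rw [hy_def]; congr 1; ring
  rw [h0]
  calc Real.exp (-y) ≤ (Nat.factorial n : ℝ) / y ^ n := hexp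
    _ = (Nat.factorial n : ℝ) * (4 / t₀ ^ 2) ^ n * (τ ^ 2) ^ n := key
    _ ≤ (Nat.factorial n : ℝ) * (4 / t₀ ^ 2) ^ n * τ ^ α := by
        apply mul_le_mul_of_nonneg_left hτpow
        positivity

/-- Gate approximation rate: if the boundary-layer mass of `μ` satisfies the margin
condition `μ{|u| ≤ t} ≤ C_U t^α` for `t ∈ (0, t₀]`, then the expected gate discrepancy
`∫ Φ(−|u|/τ) dμ(u)` is bounded by `C τ^α` for all sufficiently small `τ > 0`. -/
theorem gate_approx_rate
    (μ : Measure ℝ) [IsProbabilityMeasure μ]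
    (α C_U t₀ : ℝ) (hα : 1 ≤ α) (ht₀ : 0 < t₀)
    (hmargin : ∀ t : ℝ, t ∈ Set.Ioc (0 : ℝ) t₀ →
      (μ {u : ℝ | |u| ≤ t}).toReal ≤ C_U * t ^ α) :
    ∃ C : ℝ, ∃ τ₁ : ℝ, 0 < τ₁ ∧
      ∀ τ : ℝ, τ ∈ Set.Ioc (0 : ℝ) τ₁ →
        (∫ u, stdNormalCDF (-|u| / τ) ∂μ) ≤ C * τ ^ α := by
  have hα0 : (0:ℝ) < α := lt_of_lt_of_le one_pos hα
  -- the Gaussian density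
  set g : ℝ → ℝ := fun x => (Real.sqrt (2 * Real.pi))⁻¹ * Real.exp (-(x ^ 2) / 2) with hg
  have hgmeas : Measurable g := by fun_prop
  have hgnn : ∀ x, 0 ≤ g x := fun x => by positivity
  -- C_U is nonnegative
  have hCU : 0 ≤ C_U := by
    have h1 := hmargin t₀ ⟨ht₀, le_refl _⟩
    have h2 : (0:ℝ) ≤ (μ {u : ℝ | |u| ≤ t₀}).toReal := ENNReal.toReal_nonneg
    have h3 : (0:ℝ) < t₀ ^ α := Real.rpow_pos_of_pos ht₀ α
    nlinarith
  -- the α-th Gaussian moment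
  set M : ℝ := ∫ x in Ioi (0:ℝ), x ^ α * g x with hM
  have hMint : IntegrableOn (fun x : ℝ => x ^ α * g x) (Ioi 0) := by
    have h := integrableOn_rpow_mul_exp_neg_mul_sq (b := (1/2:ℝ)) (by norm_num)
      (s := α) (by linarith)
    have h2 : IntegrableOn
        (fun x : ℝ => (Real.sqrt (2 * Real.pi))⁻¹ * (x ^ α * Real.exp (-(1/2 : ℝ) * x ^ 2)))
        (Ioi 0) := h.const_mul (Real.sqrt (2 * Real.pi))⁻¹
    refine IntegrableOn.congr_fun h2 ?_ measurableSet_Ioi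
    intro x _
    simp only [hg]
    have : -(1/2 : ℝ) * x ^ 2 = -(x ^ 2) / 2 := by ring
    rw [this]; ring
  have hMnn : 0 ≤ M := by
    refine setIntegral_nonneg measurableSet_Ioi fun x hx => ?_
    have hx0 : (0:ℝ) ≤ x := le_of_lt hx
    have := hgnn x
    positivity
  set n : ℕ := Nat.ceil α with hn
  refine ⟨C_U * M + Real.sqrt (4 * Real.pi) * ((Nat.factorial n : ℝ) * (4 / t₀ ^ 2) ^ n),
    1, one_pos, ?_⟩
  rintro τ ⟨hτ0, hτ1⟩
  have hτα : (0:ℝ) < τ ^ α := Real.rpow_pos_of_pos hτ0 α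
  -- measurability of the integrand
  have hfm : Measurable (fun u : ℝ => stdNormalCDF (-|u| / τ)) :=
    stdNormalCDF_measurable.comp ((measurable_abs.neg).div_const τ)
  -- pass to the lower integral
  have hInt_eq : (∫ u, stdNormalCDF (-|u| / τ) ∂μ)
      = (∫⁻ u, ENNReal.ofReal (stdNormalCDF (-|u| / τ)) ∂μ).toReal :=
    integral_eq_lintegral_of_nonneg_ae
      (Eventually.of_forall fun u => stdNormalCDF_nonneg _) hfm.aestronglyMeasurable
  -- the product kernel
  set S : Set (ℝ × ℝ) := {p : ℝ × ℝ | |p.1| < τ * p.2} with hS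
  have hSmeas : MeasurableSet S :=
    measurableSet_lt (measurable_abs.comp measurable_fst) (measurable_snd.const_mul τ)
  set f : ℝ → ℝ → ℝ≥0∞ :=
    fun u x => S.indicator (fun p => ENNReal.ofReal (g p.2)) (u, x) with hf
  have hfmeas : Measurable (Function.uncurry f) := by
    have : Function.uncurry f = S.indicator (fun p => ENNReal.ofReal (g p.2)) := rfl
    rw [this]
    exact (hgmeas.comp measurable_snd).ennreal_ofReal.indicator hSmeas
  -- inner integral in x
  have hinner : ∀ u : ℝ, ∫⁻ x, f u x = ENNReal.ofReal (stdNormalCDF (-|u| / τ)) := by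
    intro u
    have h1 : ∀ x : ℝ, f u x = (Ioi (|u| / τ)).indicator (fun x => ENNReal.ofReal (g x)) x := by
      intro x
      simp only [hf, hS, Set.indicator_apply, Set.mem_setOf_eq, Set.mem_Ioi,
        div_lt_iff₀ hτ0, mul_comm]
    rw [lintegral_congr h1, lintegral_indicator measurableSet_Ioi,
      lintegral_Ioi_gaussDen, neg_div]
  -- inner integral in u
  have hinner2 : ∀ x : ℝ, (∫⁻ u, f u x ∂μ)
      = ENNReal.ofReal (g x) * μ {u : ℝ | |u| < τ * x} := by
    intro x
    have h1 : ∀ u : ℝ, f u x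
        = ({u : ℝ | |u| < τ * x}).indicator (fun _ => ENNReal.ofReal (g x)) u := by
      intro u
      simp only [hf, hS, Set.indicator_apply, Set.mem_setOf_eq]
    rw [lintegral_congr h1,
      lintegral_indicator_const (measurableSet_lt measurable_abs measurable_const)]
  -- swap
  have hswap : (∫⁻ u, ENNReal.ofReal (stdNormalCDF (-|u| / τ)) ∂μ)
      = ∫⁻ x, ENNReal.ofReal (g x) * μ {u : ℝ | |u| < τ * x} := by
    calc (∫⁻ u, ENNReal.ofReal (stdNormalCDF (-|u| / τ)) ∂μ)
        = ∫⁻ u, ∫⁻ x, f u x ∂volume ∂μ := by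
          refine lintegral_congr fun u => ?_
          rw [hinner u]
      _ = ∫⁻ x, ∫⁻ u, f u x ∂μ ∂volume := lintegral_lintegral_swap hfmeas.aemeasurable
      _ = ∫⁻ x, ENNReal.ofReal (g x) * μ {u : ℝ | |u| < τ * x} ∂volume :=
          lintegral_congr fun x => hinner2 x
  -- pointwise bound
  have hpt : ∀ x : ℝ, ENNReal.ofReal (g x) * μ {u : ℝ | |u| < τ * x}
      ≤ (Ioc (0:ℝ) (t₀ / τ)).indicator
          (fun x => ENNReal.ofReal (C_U * τ ^ α * (x ^ α * g x))) x
        + (Ioi (t₀ / τ)).indicator (fun x => ENNReal.ofReal (g x)) x := by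
    intro x
    rcases le_or_gt x 0 with hx | hx
    · have hempty : {u : ℝ | |u| < τ * x} = ∅ := by
        ext u
        simp only [Set.mem_setOf_eq, Set.mem_empty_iff_false, iff_false, not_lt]
        have : τ * x ≤ 0 := mul_nonpos_of_nonneg_of_nonpos hτ0.le hx
        exact le_trans this (abs_nonneg u)
      rw [hempty]
      simp
    · rcases le_or_gt x (t₀ / τ) with hx2 | hx2
      · have hmem : x ∈ Ioc (0:ℝ) (t₀ / τ) := ⟨hx, hx2⟩
        rw [Set.indicator_of_mem hmem]
        refine le_trans ?_ le_self_add
        have hτx : τ * x ∈ Ioc (0:ℝ) t₀ := by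
          constructor
          · positivity
          · rw [← le_div_iff₀' hτ0]
            exact hx2
        have hμ : μ {u : ℝ | |u| < τ * x} ≤ ENNReal.ofReal (C_U * (τ * x) ^ α) := by
          have hsub : μ {u : ℝ | |u| < τ * x} ≤ μ {u : ℝ | |u| ≤ τ * x} := by
            apply measure_mono
            intro u hu
            simp only [Set.mem_setOf_eq] at hu ⊢
            exact le_of_lt hu
          have hne : μ {u : ℝ | |u| ≤ τ * x} ≠ ⊤ := measure_ne_top μ _
          have : μ {u : ℝ | |u| ≤ τ * x} ≤ ENNReal.ofReal (C_U * (τ * x) ^ α) := by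
            rw [← ENNReal.ofReal_toReal hne]
            exact ENNReal.ofReal_le_ofReal (hmargin _ hτx)
          exact le_trans hsub this
        calc ENNReal.ofReal (g x) * μ {u : ℝ | |u| < τ * x}
            ≤ ENNReal.ofReal (g x) * ENNReal.ofReal (C_U * (τ * x) ^ α) :=
              mul_le_mul_right hμ _
          _ = ENNReal.ofReal (g x * (C_U * (τ * x) ^ α)) :=
              (ENNReal.ofReal_mul (hgnn x)).symm
          _ = ENNReal.ofReal (C_U * τ ^ α * (x ^ α * g x)) := by
              rw [Real.mul_rpow hτ0.le hx.le]
              ring_nf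
      · rw [Set.indicator_of_mem (Set.mem_Ioi.2 hx2)]
        refine le_trans ?_ le_add_self
        calc ENNReal.ofReal (g x) * μ {u : ℝ | |u| < τ * x}
            ≤ ENNReal.ofReal (g x) * 1 := by
              apply mul_le_mul_right
              rw [← measure_univ (μ := μ)]
              exact measure_mono (Set.subset_univ _)
          _ = ENNReal.ofReal (g x) := mul_one _
  -- bound part A
  have hA : (∫⁻ x in Ioc (0:ℝ) (t₀ / τ), ENNReal.ofReal (C_U * τ ^ α * (x ^ α * g x)))
      ≤ ENNReal.ofReal (C_U * M * τ ^ α) := by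
    have h1 : (∫⁻ x in Ioc (0:ℝ) (t₀ / τ), ENNReal.ofReal (C_U * τ ^ α * (x ^ α * g x)))
        ≤ ∫⁻ x in Ioi (0:ℝ), ENNReal.ofReal (C_U * τ ^ α * (x ^ α * g x)) :=
      lintegral_mono_set Ioc_subset_Ioi_self
    have h2 : (∫⁻ x in Ioi (0:ℝ), ENNReal.ofReal (C_U * τ ^ α * (x ^ α * g x)))
        = ENNReal.ofReal (C_U * τ ^ α) * ∫⁻ x in Ioi (0:ℝ), ENNReal.ofReal (x ^ α * g x) := by
      rw [← lintegral_const_mul' _ _ ENNReal.ofReal_ne_top]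
      refine lintegral_congr fun x => ?_
      rw [← ENNReal.ofReal_mul (by positivity)]
    have h3 : (∫⁻ x in Ioi (0:ℝ), ENNReal.ofReal (x ^ α * g x)) = ENNReal.ofReal M := by
      rw [hM, ofReal_integral_eq_lintegral_ofReal hMint ?_]
      filter_upwards [ae_restrict_mem measurableSet_Ioi] with x hx
      have hx0 : (0:ℝ) ≤ x := le_of_lt hx
      have := hgnn x
      positivity
    calc (∫⁻ x in Ioc (0:ℝ) (t₀ / τ), ENNReal.ofReal (C_U * τ ^ α * (x ^ α * g x)))
        ≤ ENNReal.ofReal (C_U * τ ^ α) * ENNReal.ofReal M := by rw [← h3, ← h2]; exact h1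
      _ = ENNReal.ofReal (C_U * τ ^ α * M) := (ENNReal.ofReal_mul (by positivity)).symm
      _ = ENNReal.ofReal (C_U * M * τ ^ α) := by ring_nf
  -- bound part B
  have hB : (∫⁻ x in Ioi (t₀ / τ), ENNReal.ofReal (g x))
      ≤ ENNReal.ofReal
          (Real.sqrt (4 * Real.pi) * ((Nat.factorial n : ℝ) * (4 / t₀ ^ 2) ^ n) * τ ^ α) := by
    rw [lintegral_Ioi_gaussDen]
    apply ENNReal.ofReal_le_ofReal
    have h1 := stdNormalCDF_tail (t₀ / τ) (by positivity)
    have h2 := exp_small α t₀ τ hα0 ht₀ hτ0 hτ1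
    have h3 : Real.sqrt (4 * Real.pi) * Real.exp (-((t₀ / τ) ^ 2) / 4)
        ≤ Real.sqrt (4 * Real.pi)
          * ((Nat.factorial n : ℝ) * (4 / t₀ ^ 2) ^ n * τ ^ α) := by
      apply mul_le_mul_of_nonneg_left h2 (Real.sqrt_nonneg _)
    calc stdNormalCDF (-(t₀ / τ)) ≤ _ := h1
      _ ≤ _ := h3
      _ = Real.sqrt (4 * Real.pi) * ((Nat.factorial n : ℝ) * (4 / t₀ ^ 2) ^ n) * τ ^ α := by
          ring
  -- assemble
  rw [hInt_eq, hswap]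
  have hfinal : (∫⁻ x, ENNReal.ofReal (g x) * μ {u : ℝ | |u| < τ * x})
      ≤ ENNReal.ofReal ((C_U * M
          + Real.sqrt (4 * Real.pi) * ((Nat.factorial n : ℝ) * (4 / t₀ ^ 2) ^ n)) * τ ^ α) := by
    calc (∫⁻ x, ENNReal.ofReal (g x) * μ {u : ℝ | |u| < τ * x})
        ≤ ∫⁻ x, ((Ioc (0:ℝ) (t₀ / τ)).indicator
              (fun x => ENNReal.ofReal (C_U * τ ^ α * (x ^ α * g x))) x
            + (Ioi (t₀ / τ)).indicator (fun x => ENNReal.ofReal (g x)) x) :=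
          lintegral_mono hpt
      _ = (∫⁻ x in Ioc (0:ℝ) (t₀ / τ), ENNReal.ofReal (C_U * τ ^ α * (x ^ α * g x)))
          + ∫⁻ x in Ioi (t₀ / τ), ENNReal.ofReal (g x) := by
          have hm1 : Measurable ((Ioc (0:ℝ) (t₀ / τ)).indicator
              (fun x => ENNReal.ofReal (C_U * τ ^ α * (x ^ α * g x)))) := by
            refine Measurable.indicator ?_ measurableSet_Ioc
            fun_prop
          rw [lintegral_add_left hm1,
            lintegral_indicator measurableSet_Ioc, lintegral_indicator measurableSet_Ioi]
      _ ≤ ENNReal.ofReal (C_U * M * τ ^ α)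
          + ENNReal.ofReal
            (Real.sqrt (4 * Real.pi) * ((Nat.factorial n : ℝ) * (4 / t₀ ^ 2) ^ n) * τ ^ α) :=
          add_le_add hA hB
      _ = ENNReal.ofReal ((C_U * M
          + Real.sqrt (4 * Real.pi) * ((Nat.factorial n : ℝ) * (4 / t₀ ^ 2) ^ n)) * τ ^ α) := by
          rw [← ENNReal.ofReal_add (by positivity) (by positivity)]
          ring_nf
  exact ENNReal.toReal_le_of_le_ofReal (by positivity) hfinal
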